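/- arXiv:math/0402159 — 3 statements merged into one kernel-verified Lean document; each statement's English description precedes it below -/
import Mathlib

section
/- Let n ≥ 2, k an algebraically closed field of characteristic prime to n, Q a primitive n-th root of unity in k, and ω(i,j,k) = Q^{i·(j'+k'-(j+k)')/n} the 3-cocycle on ℤ/nℤ. Then for 1 ≤ l ≤ n-1, the cocycle ω^l is not a coboundary; i.e. there is no function μ : (ℤ/nℤ)² → k^× with ω^l = dμ. -/
/-- For 1 ≤ l ≤ n-1, the 3-cocycle ω^l on ℤ/nℤ is not a coboundary. -/
theorem omega_pow_not_coboundary (n : ℕ) (hn : 2 ≤ n) (k : Type*) [Field k]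
    [IsAlgClosed k] (hchar : (n : k) ≠ 0)
    (Q : k) (hQ : IsPrimitiveRoot Q n)
    (ω : ZMod n → ZMod n → ZMod n → k)
    (hω : ∀ i j l : ZMod n,
      ω i j l = Q ^ (i.val * ((j.val + l.val - (j + l).val) / n)))
    (l : ℕ) (hl1 : 1 ≤ l) (hl2 : l ≤ n - 1) :
    ¬ ∃ μ : ZMod n → ZMod n → kˣ, ∀ i j m : ZMod n,
      (ω i j m) ^ l =
        (μ j m : k) * (μ i (j + m) : k) * ((μ (i + j) m : k))⁻¹ * ((μ i j : k))⁻¹ := by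
  haveI : NeZero n := ⟨by omega⟩
  haveI : Fact (1 < n) := ⟨by omega⟩
  rintro ⟨μ, hμ⟩
  have h1 : (1 : ZMod n).val = 1 := ZMod.val_one n
  have hneg : (-1 : ZMod n).val = n - 1 := by
    obtain ⟨m, rfl⟩ : ∃ m, n = m + 1 := ⟨n - 1, by omega⟩
    simp [ZMod.val_neg_one m]
  -- the product of the coboundary relation over j, with i = m = 1
  have key : ∏ j : ZMod n, (ω 1 j 1) ^ l
      = ∏ j : ZMod n, ((μ j 1 : k) * (μ 1 (j + 1) : k) * ((μ (1 + j) 1 : k))⁻¹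
          * ((μ 1 j : k))⁻¹) :=
    Finset.prod_congr rfl fun j _ => hμ 1 j 1
  -- RHS = 1
  have hA : ∏ j : ZMod n, (μ 1 (j + 1) : k) = ∏ j : ZMod n, (μ 1 j : k) :=
    Fintype.prod_equiv (Equiv.addRight 1) _ _ fun j => rfl
  have hB : ∏ j : ZMod n, (μ (1 + j) 1 : k) = ∏ j : ZMod n, (μ j 1 : k) :=
    Fintype.prod_equiv (Equiv.addLeft 1) _ _ fun j => rfl
  have hAne : (∏ j : ZMod n, (μ 1 j : k)) ≠ 0 :=
    Finset.prod_ne_zero_iff.2 fun j _ => (μ 1 j).ne_zero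
  have hBne : (∏ j : ZMod n, (μ j 1 : k)) ≠ 0 :=
    Finset.prod_ne_zero_iff.2 fun j _ => (μ j 1).ne_zero
  have hRHS : ∏ j : ZMod n, ((μ j 1 : k) * (μ 1 (j + 1) : k) * ((μ (1 + j) 1 : k))⁻¹
      * ((μ 1 j : k))⁻¹) = 1 := by
    simp only [Finset.prod_mul_distrib, Finset.prod_inv_distrib, hA, hB]
    field_simp
  -- LHS = Q ^ l
  have hsum : ∑ j : ZMod n, (j.val + (1 : ZMod n).val - (j + 1).val) / n = 1 := by
    rw [Finset.sum_eq_single (-1 : ZMod n)]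
    · have : ((-1 : ZMod n) + 1).val = 0 := by simp
      rw [this, hneg, h1]
      have : n - 1 + 1 = n := by omega
      rw [this, Nat.sub_zero, Nat.div_self (by omega)]
    · intro j _ hj
      have hjv : j.val < n - 1 := by
        have hle : j.val < n := ZMod.val_lt j
        rcases lt_or_eq_of_le (Nat.le_sub_one_of_lt hle) with h | h
        · exact h
        · exfalso; apply hj
          have : j = (ZMod.val j : ZMod n) := (ZMod.natCast_zmod_val j).symm
          rw [this, h, Nat.cast_sub (by omega), ZMod.natCast_self, Nat.cast_one,
            zero_sub]
      have : (j + 1).val = j.val + 1 := by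
        rw [ZMod.val_add_of_lt (by omega)]
        exact congrArg (j.val + ·) h1
      rw [this, h1, Nat.sub_self, Nat.zero_div]
    · intro h; exact absurd (Finset.mem_univ _) h
  have hLHS : ∏ j : ZMod n, (ω 1 j 1) ^ l = Q ^ l := by
    have : ∀ j : ZMod n, (ω 1 j 1) ^ l
        = Q ^ (l * ((j.val + (1 : ZMod n).val - (j + 1).val) / n)) := by
      intro j
      rw [hω 1 j 1, h1, one_mul, ← pow_mul, mul_comm]
    rw [Finset.prod_congr rfl fun j _ => this j]
    simp only [pow_mul]
    rw [Finset.prod_pow_eq_pow_sum, hsum, pow_one]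
  rw [hLHS, hRHS] at key
  exact hQ.pow_ne_one_of_pos_of_lt (by omega) (by omega) key
end

section
/- Let H(q) be the Taft algebra generated by g, x with x^{n²} = 0, g^{n²} = 1, gx = qxg (q a primitive n²-th root of unity, char k prime to n). Let A(q) be the subalgebra generated by a := g^n and x. Then dim_k A(q) = n³, with basis {x^i a^j : 0 ≤ i ≤ n²-1, 0 ≤ j ≤ n-1}. -/
/-- Relations of the Taft algebra: x^{n²} = 0, g^{n²} = 1, gx = qxg,
    where `false` corresponds to g and `true` to x. -/
inductive TaftRel (k : Type*) [CommRing k] (n : ℕ) (q : k) :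
    FreeAlgebra k Bool → FreeAlgebra k Bool → Prop
  | xpow : TaftRel k n q (FreeAlgebra.ι k true ^ n ^ 2) 0
  | gpow : TaftRel k n q (FreeAlgebra.ι k false ^ n ^ 2) 1
  | comm : TaftRel k n q (FreeAlgebra.ι k false * FreeAlgebra.ι k true)
      (q • (FreeAlgebra.ι k true * FreeAlgebra.ι k false))

/-- The Taft algebra H(q), of dimension n⁴. -/
def TaftAlgebra (k : Type*) [CommRing k] (n : ℕ) (q : k) : Type _ :=
  RingQuot (TaftRel k n q)

noncomputable instance (k : Type*) [CommRing k] (n : ℕ) (q : k) :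
    Ring (TaftAlgebra k n q) := by unfold TaftAlgebra; infer_instance

noncomputable instance (k : Type*) [CommRing k] (n : ℕ) (q : k) :
    Algebra k (TaftAlgebra k n q) := by unfold TaftAlgebra; infer_instance

/-- The image of g in the Taft algebra. -/
noncomputable def TaftG (k : Type*) [CommRing k] (n : ℕ) (q : k) :
    TaftAlgebra k n q :=
  RingQuot.mkAlgHom k (TaftRel k n q) (FreeAlgebra.ι k false)

/-- The image of x in the Taft algebra. -/
noncomputable def TaftX (k : Type*) [CommRing k] (n : ℕ) (q : k) :
    TaftAlgebra k n q :=
  RingQuot.mkAlgHom k (TaftRel k n q) (FreeAlgebra.ι k true)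


/-! The monomials `xⁱaʲ` span `A(q)`: since `a x = qⁿ x a`, every word in `a` and `x` is a scalar
multiple of some `xⁱaʲ`, and `x^{n²} = 0`, `aⁿ = 1` bound the exponents. They are linearly
independent because already the `xⁱgʲ` with `i, j < n²` are: `H(q)` acts on functions on
`Fin n² × ZMod n²`, and `xⁱgʲ` sends the delta function at `(0, 0)` to the one at `(i, j)`. -/

section SkewCommute

variable {k B : Type*} [CommSemiring k] [Semiring B] [Algebra k B] {a b : B} {c : k}

theorem mul_pow_eq_smul_pow_mul (h : a * b = c • (b * a)) (i : ℕ) :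
    a * b ^ i = c ^ i • (b ^ i * a) := by
  induction i with
  | zero => simp
  | succ i ih =>
    rw [pow_succ, ← mul_assoc, ih, smul_mul_assoc, mul_assoc, h, mul_smul_comm, smul_smul,
      ← mul_assoc, pow_succ]

theorem pow_mul_pow_eq_smul_pow_mul_pow (h : a * b = c • (b * a)) (m i : ℕ) :
    a ^ m * b ^ i = c ^ (m * i) • (b ^ i * a ^ m) := by
  induction m with
  | zero => simp
  | succ m ih =>
    rw [pow_succ', mul_assoc, ih, mul_smul_comm, ← mul_assoc, mul_pow_eq_smul_pow_mul h,
      smul_mul_assoc, smul_smul, mul_assoc, ← pow_succ', ← pow_add, add_mul, one_mul, add_comm]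

theorem exists_smul_pow_mul_pow_of_mem_closure (h : a * b = c • (b * a)) {z : B}
    (hz : z ∈ Submonoid.closure {a, b}) : ∃ (r : k) (i j : ℕ), z = r • (b ^ i * a ^ j) := by
  induction hz using Submonoid.closure_induction_left with
  | one => exact ⟨1, 0, 0, by simp⟩
  | mul_left s hs y _ ih =>
    obtain ⟨r, i, j, rfl⟩ := ih
    rcases hs with rfl | rfl
    · refine ⟨r * c ^ i, i, j + 1, ?_⟩
      rw [mul_smul_comm, ← mul_assoc, mul_pow_eq_smul_pow_mul h, smul_mul_assoc, smul_smul,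
        mul_assoc, ← pow_succ', mul_comm]
    · exact ⟨r, i + 1, j, by rw [mul_smul_comm, ← mul_assoc, ← pow_succ']⟩

end SkewCommute

namespace TaftAlgebra

section Relations

variable {k : Type*} [CommRing k] {n : ℕ} {q : k}

theorem taftX_pow_sq : TaftX k n q ^ n ^ 2 = 0 := by
  have h := RingQuot.mkAlgHom_rel k (TaftRel.xpow (k := k) (n := n) (q := q))
  rwa [map_pow, map_zero] at h

theorem taftG_pow_sq : TaftG k n q ^ n ^ 2 = 1 := by
  have h := RingQuot.mkAlgHom_rel k (TaftRel.gpow (k := k) (n := n) (q := q))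
  rwa [map_pow, map_one] at h

theorem taftG_mul_taftX : TaftG k n q * TaftX k n q = q • (TaftX k n q * TaftG k n q) := by
  have h := RingQuot.mkAlgHom_rel k (TaftRel.comm (k := k) (n := n) (q := q))
  rwa [map_mul, map_smul, map_mul] at h

variable {B : Type*} [Semiring B] [Algebra k B] (x g : B)
  (hx : x ^ n ^ 2 = 0) (hg : g ^ n ^ 2 = 1) (hgx : g * x = q • (x * g))

noncomputable def lift : TaftAlgebra k n q →ₐ[k] B :=
  RingQuot.liftAlgHom k ⟨FreeAlgebra.lift k fun b => cond b x g, fun _ _ h => by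
    cases h <;> simp [hx, hg, hgx]⟩

@[simp]
theorem lift_taftX : lift x g hx hg hgx (TaftX k n q) = x :=
  (RingQuot.liftAlgHom_mkAlgHom_apply ..).trans (FreeAlgebra.lift_ι_apply ..)

@[simp]
theorem lift_taftG : lift x g hx hg hgx (TaftG k n q) = g :=
  (RingQuot.liftAlgHom_mkAlgHom_apply ..).trans (FreeAlgebra.lift_ι_apply ..)

end Relations

section Model

variable (k : Type*) [CommRing k] (d : ℕ) (q : k)

/- `v (i, j)` is read as the coefficient of `xⁱgʲ`; then `shiftEnd` and `twistEnd` are left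
multiplication by `x` and by `g` (`g xⁱgʲ = qⁱ xⁱgʲ⁺¹`). -/

def shiftEnd : Module.End k (Fin d × ZMod d → k) where
  toFun v p := if h : 0 < (p.1 : ℕ) then v (⟨p.1 - 1, by omega⟩, p.2) else 0
  map_add' u v := by ext p; simp only [Pi.add_apply]; split_ifs <;> simp
  map_smul' c v := by ext p; simp only [Pi.smul_apply]; split_ifs <;> simp

def twistEnd : Module.End k (Fin d × ZMod d → k) where
  toFun v p := q ^ (p.1 : ℕ) * v (p.1, p.2 - 1)
  map_add' u v := by ext p; simp [mul_add]
  map_smul' c v := by ext p; simp [mul_left_comm]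

variable {k d q}

theorem shiftEnd_apply (v : Fin d × ZMod d → k) (p : Fin d × ZMod d) :
    shiftEnd k d v p = if h : 0 < (p.1 : ℕ) then v (⟨p.1 - 1, by omega⟩, p.2) else 0 :=
  rfl

theorem shiftEnd_pow_apply (m : ℕ) (v : Fin d × ZMod d → k) (p : Fin d × ZMod d) :
    (shiftEnd k d ^ m) v p =
      if h : m ≤ (p.1 : ℕ) then v (⟨p.1 - m, by omega⟩, p.2) else 0 := by
  induction m generalizing v with
  | zero => simp
  | succ m ih =>
    rw [pow_succ, Module.End.mul_apply, ih]
    by_cases h : m + 1 ≤ (p.1 : ℕ)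
    · rw [dif_pos (by omega), shiftEnd_apply, dif_pos (by simp; omega), dif_pos h]
      simp [Nat.sub_sub]
    · rw [dif_neg h]
      split_ifs
      · rw [shiftEnd_apply, dif_neg (by simp; omega)]
      · rfl

theorem twistEnd_pow_apply (m : ℕ) (v : Fin d × ZMod d → k) (p : Fin d × ZMod d) :
    (twistEnd k d q ^ m) v p = q ^ (m * (p.1 : ℕ)) * v (p.1, p.2 - m) := by
  induction m generalizing v with
  | zero => simp
  | succ m ih =>
    rw [pow_succ, Module.End.mul_apply, ih, twistEnd, LinearMap.coe_mk, AddHom.coe_mk]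
    simp only [Nat.cast_succ, sub_add_eq_sub_sub, ← mul_assoc, ← pow_add]
    ring_nf

theorem shiftEnd_pow_self : shiftEnd k d ^ d = 0 := by
  ext v p
  simp [shiftEnd_pow_apply]

theorem twistEnd_pow_self (hq : q ^ d = 1) : twistEnd k d q ^ d = 1 := by
  ext v p
  simp [twistEnd_pow_apply, pow_mul, hq]

theorem twistEnd_mul_shiftEnd :
    twistEnd k d q * shiftEnd k d = q • (shiftEnd k d * twistEnd k d q) := by
  ext v p
  simp only [Module.End.mul_apply, LinearMap.smul_apply, Pi.smul_apply, smul_eq_mul,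
    twistEnd, shiftEnd, LinearMap.coe_mk, AddHom.coe_mk]
  split_ifs with h
  · rw [← mul_assoc, ← pow_succ']
    congr 2
    omega
  · simp

theorem shiftEnd_pow_twistEnd_pow_single_zero [NeZero d] (i : Fin d) (j : ℕ) :
    (shiftEnd k d ^ (i : ℕ)) ((twistEnd k d q ^ j) (Pi.single 0 1)) =
      Pi.single (i, (j : ZMod d)) 1 := by
  ext p
  simp only [shiftEnd_pow_apply, twistEnd_pow_apply, Pi.single_apply, Prod.ext_iff, Fin.ext_iff,
    Prod.fst_zero, Prod.snd_zero, Fin.val_zero, sub_eq_zero]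
  split_ifs <;> simp_all
  omega

end Model

variable {k : Type*} [CommRing k] {n : ℕ} {q : k}

noncomputable def regularRep (hq : q ^ n ^ 2 = 1) :
    TaftAlgebra k n q →ₐ[k] Module.End k (Fin (n ^ 2) × ZMod (n ^ 2) → k) :=
  lift (shiftEnd k _) (twistEnd k _ q) shiftEnd_pow_self (twistEnd_pow_self hq)
    twistEnd_mul_shiftEnd

theorem linearIndependent_taftX_pow_mul_taftG_pow [NeZero n] (hq : q ^ n ^ 2 = 1) :
    LinearIndependent k fun p : Fin (n ^ 2) × Fin (n ^ 2) =>
      TaftX k n q ^ (p.1 : ℕ) * TaftG k n q ^ (p.2 : ℕ) := by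
  let φ := LinearMap.applyₗ (R := k) (Pi.single 0 1) ∘ₗ (regularRep hq).toLinearMap
  have hφ : φ ∘ (fun p : Fin (n ^ 2) × Fin (n ^ 2) =>
      TaftX k n q ^ (p.1 : ℕ) * TaftG k n q ^ (p.2 : ℕ)) =
      fun p => Pi.single (p.1, ((p.2 : ℕ) : ZMod (n ^ 2))) 1 := by
    ext p : 1
    simp [φ, regularRep, shiftEnd_pow_twistEnd_pow_single_zero]
  have hinj : Function.Injective fun p : Fin (n ^ 2) × Fin (n ^ 2) =>
      (p.1, ((p.2 : ℕ) : ZMod (n ^ 2))) := by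
    intro p p' h
    simp only [Prod.mk.injEq, ZMod.natCast_eq_natCast_iff', Nat.mod_eq_of_lt p.2.isLt,
      Nat.mod_eq_of_lt p'.2.isLt] at h
    exact Prod.ext h.1 (Fin.ext h.2)
  refine LinearIndependent.of_comp φ ?_
  rw [hφ]
  exact (Pi.linearIndependent_single_one _ k).comp _ hinj

theorem linearIndependent_taftX_pow_mul_taftG_pow_pow [NeZero n] (hq : q ^ n ^ 2 = 1) :
    LinearIndependent k fun p : Fin (n ^ 2) × Fin n =>
      TaftX k n q ^ (p.1 : ℕ) * (TaftG k n q ^ n) ^ (p.2 : ℕ) := by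
  let e (p : Fin (n ^ 2) × Fin n) : Fin (n ^ 2) × Fin (n ^ 2) :=
    (p.1, ⟨n * p.2, by nlinarith [p.2.isLt, NeZero.pos n]⟩)
  have he : Function.Injective e := fun p p' h => by
    simp only [e, Prod.mk.injEq, Fin.mk.injEq, mul_right_inj' (NeZero.ne n)] at h
    exact Prod.ext h.1 (Fin.ext h.2)
  convert (linearIndependent_taftX_pow_mul_taftG_pow hq).comp e he using 1
  ext p
  simp [e, pow_mul]

theorem taftX_pow_mul_taftG_pow_pow_mem_span [NeZero n] (i j : ℕ) :
    TaftX k n q ^ i * (TaftG k n q ^ n) ^ j ∈ Submodule.span k (Set.range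
      fun p : Fin (n ^ 2) × Fin n => TaftX k n q ^ (p.1 : ℕ) * (TaftG k n q ^ n) ^ (p.2 : ℕ)) := by
  by_cases hi : i < n ^ 2
  · rw [pow_eq_pow_mod j (by rw [← pow_mul, ← sq, taftG_pow_sq])]
    exact Submodule.subset_span ⟨(⟨i, hi⟩, ⟨j % n, Nat.mod_lt _ (NeZero.pos n)⟩), rfl⟩
  · rw [← Nat.sub_add_cancel (not_lt.mp hi), pow_add, taftX_pow_sq, mul_zero, zero_mul]
    exact zero_mem _

theorem toSubmodule_adjoin_le_span [NeZero n] :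
    Subalgebra.toSubmodule (Algebra.adjoin k {TaftG k n q ^ n, TaftX k n q}) ≤
      Submodule.span k (Set.range fun p : Fin (n ^ 2) × Fin n =>
        TaftX k n q ^ (p.1 : ℕ) * (TaftG k n q ^ n) ^ (p.2 : ℕ)) := by
  rw [Algebra.adjoin_eq_span, Submodule.span_le]
  intro z hz
  have hax : TaftG k n q ^ n * TaftX k n q = q ^ n • (TaftX k n q * TaftG k n q ^ n) := by
    simpa using pow_mul_pow_eq_smul_pow_mul_pow (taftG_mul_taftX (k := k) (n := n)) n 1
  obtain ⟨r, i, j, rfl⟩ := exists_smul_pow_mul_pow_of_mem_closure hax hz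
  exact Submodule.smul_mem _ r (taftX_pow_mul_taftG_pow_pow_mem_span i j)

end TaftAlgebra

theorem taft_subalgebra_basis_general (n : ℕ) (hn : 2 ≤ n) (k : Type*) [Field k]
    (q : k) (hq : IsPrimitiveRoot q (n ^ 2)) :
    let A : Subalgebra k (TaftAlgebra k n q) :=
      Algebra.adjoin k {TaftG k n q ^ n, TaftX k n q}
    (∃ b : Module.Basis (Fin (n ^ 2) × Fin n) k A,
      ∀ p : Fin (n ^ 2) × Fin n,
        (b p : TaftAlgebra k n q) =
          TaftX k n q ^ (p.1 : ℕ) * (TaftG k n q ^ n) ^ (p.2 : ℕ)) ∧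
    Module.finrank k A = n ^ 3 := by
  intro A
  have : NeZero n := ⟨by omega⟩
  have hli := TaftAlgebra.linearIndependent_taftX_pow_mul_taftG_pow_pow hq.pow_eq_one
  have hmem (p : Fin (n ^ 2) × Fin n) :
      TaftX k n q ^ (p.1 : ℕ) * (TaftG k n q ^ n) ^ (p.2 : ℕ) ∈ A :=
    A.mul_mem (A.pow_mem (Algebra.subset_adjoin (by simp)) _)
      (A.pow_mem (Algebra.subset_adjoin (by simp)) _)
  have hspan : Submodule.span k _ = Subalgebra.toSubmodule A :=
    le_antisymm (Submodule.span_le.mpr (Set.range_subset_iff.mpr hmem))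
      TaftAlgebra.toSubmodule_adjoin_le_span
  let b : Module.Basis (Fin (n ^ 2) × Fin n) k A :=
    (Module.Basis.span hli).map (LinearEquiv.ofEq _ _ hspan)
  refine ⟨⟨b, fun p => congrArg Subtype.val (Module.Basis.span_apply hli p)⟩, ?_⟩
  rw [Module.finrank_eq_card_basis b]
  simp [pow_succ]

set_option synthInstance.maxHeartbeats 1000000 in
/-- The subalgebra A(q) of the Taft algebra generated by a := gⁿ and x has
    dimension n³, with basis {xⁱ aʲ : 0 ≤ i < n², 0 ≤ j < n}. -/
theorem taft_subalgebra_basis (n : ℕ) (hn : 2 ≤ n) (k : Type*) [Field k]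
    (hchar : (n : k) ≠ 0) (q : k) (hq : IsPrimitiveRoot q (n ^ 2)) :
    let A : Subalgebra k (TaftAlgebra k n q) :=
      Algebra.adjoin k {TaftG k n q ^ n, TaftX k n q}
    (∃ b : Module.Basis (Fin (n ^ 2) × Fin n) k A,
      ∀ p : Fin (n ^ 2) × Fin n,
        (b p : TaftAlgebra k n q) =
          TaftX k n q ^ (p.1 : ℕ) * (TaftG k n q ^ n) ^ (p.2 : ℕ)) ∧
    Module.finrank k A = n ^ 3 :=
  taft_subalgebra_basis_general n hn k q hq
end

section
/- Let n ≥ 2, k algebraically closed of characteristic 0, Q a primitive n-th root of unity. Let B(Q) be the k-algebra generated by ξ, η, a with relations a^n = 1, ξ^n = 1, η^n = 1, ξa = Qaξ, ηa = Qaη, and ξη = E_0^{-1}E_{-1} ηξ, where E_r are the elements of k[⟨a⟩] defined by E_r = Σ_{k=0}^{n-2} 𝟏_{k-r} + Q𝟏_{n-1-r} (𝟏_s the primitive idempotents of k[⟨a⟩] with a𝟏_s = Q^s 𝟏_s). Then the elements {a^i ξ^j η^k : 0 ≤ i,j,k ≤ n-1} span B(Q); in particular dim_k B(Q) ≤ n³.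 -/
open Finset

/-- The idempotent 𝟏ₛ of k[⟨a⟩], as a polynomial in the generator a = ι 0
    of the free algebra on three generators a, ξ, η. -/
noncomputable def oneF (k : Type*) [Field k] (n : ℕ) (Q : k) (s : ZMod n) :
    FreeAlgebra k (Fin 3) :=
  ((n : k))⁻¹ • ∑ j ∈ range n, (Q ^ (s.val * j))⁻¹ • FreeAlgebra.ι k 0 ^ j

/-- The element E_r = Σ_{m=0}^{n-2} 𝟏_{m-r} + Q·𝟏_{n-1-r}, as a polynomial
    in a = ι 0. -/
noncomputable def EF (k : Type*) [Field k] (n : ℕ) (Q : k) (r : ZMod n) :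
    FreeAlgebra k (Fin 3) :=
  (∑ m ∈ range (n - 1), oneF k n Q ((m : ZMod n) - r)) +
    Q • oneF k n Q (((n : ZMod n) - 1) - r)

/-- The defining relations of the algebra B(Q): aⁿ = ξⁿ = ηⁿ = 1,
    ξa = Q·aξ, ηa = Q·aη, and E₀·ξη = E₋₁·ηξ (equivalent to
    ξη = E₀⁻¹E₋₁·ηξ since E₀ is invertible). Here a = ι 0, ξ = ι 1, η = ι 2. -/
inductive BRel (k : Type*) [Field k] (n : ℕ) (Q : k) :
    FreeAlgebra k (Fin 3) → FreeAlgebra k (Fin 3) → Prop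
  | apow : BRel k n Q (FreeAlgebra.ι k 0 ^ n) 1
  | xipow : BRel k n Q (FreeAlgebra.ι k 1 ^ n) 1
  | etapow : BRel k n Q (FreeAlgebra.ι k 2 ^ n) 1
  | xia : BRel k n Q (FreeAlgebra.ι k 1 * FreeAlgebra.ι k 0)
      (Q • (FreeAlgebra.ι k 0 * FreeAlgebra.ι k 1))
  | etaa : BRel k n Q (FreeAlgebra.ι k 2 * FreeAlgebra.ι k 0)
      (Q • (FreeAlgebra.ι k 0 * FreeAlgebra.ι k 2))
  | xieta : BRel k n Q
      (EF k n Q 0 * (FreeAlgebra.ι k 1 * FreeAlgebra.ι k 2))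
      (EF k n Q (-1) * (FreeAlgebra.ι k 2 * FreeAlgebra.ι k 1))

/-- The algebra B(Q). -/
def BAlgebra (k : Type*) [Field k] (n : ℕ) (Q : k) : Type _ :=
  RingQuot (BRel k n Q)

noncomputable instance (k : Type*) [Field k] (n : ℕ) (Q : k) :
    Ring (BAlgebra k n Q) := by unfold BAlgebra; infer_instance

noncomputable instance (k : Type*) [Field k] (n : ℕ) (Q : k) :
    Algebra k (BAlgebra k n Q) := by unfold BAlgebra; infer_instance

/-- The generator a of B(Q). -/
noncomputable def Ba (k : Type*) [Field k] (n : ℕ) (Q : k) : BAlgebra k n Q :=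
  RingQuot.mkAlgHom k (BRel k n Q) (FreeAlgebra.ι k 0)

/-- The generator ξ of B(Q). -/
noncomputable def Bxi (k : Type*) [Field k] (n : ℕ) (Q : k) : BAlgebra k n Q :=
  RingQuot.mkAlgHom k (BRel k n Q) (FreeAlgebra.ι k 1)

/-- The generator η of B(Q). -/
noncomputable def Beta (k : Type*) [Field k] (n : ℕ) (Q : k) : BAlgebra k n Q :=
  RingQuot.mkAlgHom k (BRel k n Q) (FreeAlgebra.ι k 2)

/-! The span of the monomials aⁱξʲηᵐ contains 1 and is stable under left multiplication by
a, ξ and η, hence is all of B(Q); the exponents may be reduced mod n since aⁿ = ξⁿ = ηⁿ = 1.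
Stability under a and ξ is immediate from ξa = Q·aξ. For η one needs ηξʲ ∈ k[a]·ξʲη, which
follows from ηξ = c(a)·ξη for a polynomial c: E₋₁ takes only the values 1 and Q at the n-th
roots of unity, so it is coprime to Xⁿ - 1 and E₋₁(a) is invertible in k[a]. -/

open Polynomial

section SkewMonomials

variable {R A : Type*} [CommRing R] [Ring A] [Algebra R A]

theorem Submodule.span_eq_top_of_mul_mem_span {s M : Set A} (hs : Algebra.adjoin R s = ⊤)
    (h1 : (1 : A) ∈ Submodule.span R M)
    (hmul : ∀ x ∈ s, ∀ m ∈ M, x * m ∈ Submodule.span R M) :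
    Submodule.span R M = ⊤ := by
  set S := Submodule.span R M
  have hstable : ∀ x ∈ s, ∀ w ∈ S, x * w ∈ S := fun x hx w hw =>
    (Submodule.span_le (p := S.comap (LinearMap.mulLeft R x))).2 (hmul x hx) hw
  refine eq_top_iff.2 fun z _ => ?_
  have hz : z ∈ Algebra.adjoin R s := hs ▸ Algebra.mem_top
  simpa using Algebra.adjoin_induction (p := fun z _ => ∀ w ∈ S, z * w ∈ S) hstable
    (fun r w hw => by rw [← Algebra.smul_def]; exact S.smul_mem r hw)
    (fun _ _ _ _ hx hy w hw => by rw [add_mul]; exact S.add_mem (hx w hw) (hy w hw))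
    (fun _ _ _ _ hx hy w hw => by rw [mul_assoc]; exact hx _ (hy w hw)) hz 1 h1

variable {a x y : A} {q : R}

theorem mul_pow_of_mul_eq_smul (h : x * a = q • (a * x)) (i : ℕ) :
    x * a ^ i = q ^ i • (a ^ i * x) := by
  induction i with
  | zero => simp
  | succ i ih =>
    rw [pow_succ, ← mul_assoc, ih, smul_mul_assoc, mul_assoc, h, mul_smul_comm, smul_smul,
      ← mul_assoc, ← pow_succ, ← pow_succ]

theorem mul_aeval_of_mul_eq_smul (h : x * a = q • (a * x)) (p : R[X]) :
    x * aeval a p = aeval a (p.comp (C q * X)) * x := by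
  induction p using Polynomial.induction_on' with
  | add p p' hp hp' => rw [map_add, mul_add, hp, hp', add_comp, map_add, add_mul]
  | monomial m c =>
    rw [← C_mul_X_pow_eq_monomial, mul_comp, C_comp, X_pow_comp, mul_pow, ← C_pow, ← mul_assoc,
      ← C_mul, map_mul, map_mul, aeval_C, aeval_C, aeval_X_pow, ← mul_assoc, ← Algebra.commutes,
      mul_assoc, mul_pow_of_mul_eq_smul h, map_mul, Algebra.smul_def]
    simp only [mul_assoc]

theorem exists_mul_pow_eq_aeval_mul {c : R[X]} (hxa : x * a = q • (a * x))
    (hyx : y * x = aeval a c * (x * y)) (j : ℕ) :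
    ∃ p : R[X], y * x ^ j = aeval a p * x ^ j * y := by
  induction j with
  | zero => exact ⟨1, by simp⟩
  | succ j ih =>
    obtain ⟨p, hp⟩ := ih
    refine ⟨c * p.comp (C q * X), ?_⟩
    calc y * x ^ (j + 1) = aeval a c * (x * (y * x ^ j)) := by
          rw [pow_succ', ← mul_assoc, hyx, mul_assoc, mul_assoc]
      _ = aeval a c * (x * aeval a p) * x ^ j * y := by rw [hp]; simp only [mul_assoc]
      _ = aeval a (c * p.comp (C q * X)) * x ^ (j + 1) * y := by
          rw [mul_aeval_of_mul_eq_smul hxa, map_mul, pow_succ']; simp only [mul_assoc]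

theorem aeval_mul_pow_mul_pow_mem_span (p : R[X]) (j m : ℕ) :
    aeval a p * x ^ j * y ^ m ∈
      Submodule.span R (Set.range fun t : ℕ × ℕ × ℕ => a ^ t.1 * x ^ t.2.1 * y ^ t.2.2) := by
  rw [aeval_eq_sum_range, Finset.sum_mul, Finset.sum_mul]
  refine Submodule.sum_mem _ fun i _ => ?_
  rw [smul_mul_assoc, smul_mul_assoc]
  exact Submodule.smul_mem _ _ (Submodule.subset_span ⟨(i, j, m), rfl⟩)

theorem span_monomials_eq_top {c : R[X]} (hs : Algebra.adjoin R {a, x, y} = ⊤)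
    (hxa : x * a = q • (a * x)) (hya : y * a = q • (a * y))
    (hyx : y * x = aeval a c * (x * y)) :
    Submodule.span R (Set.range fun t : ℕ × ℕ × ℕ => a ^ t.1 * x ^ t.2.1 * y ^ t.2.2) = ⊤ := by
  refine Submodule.span_eq_top_of_mul_mem_span hs
    (Submodule.subset_span ⟨(0, 0, 0), by simp⟩) ?_
  rintro g (hg | hg | hg) _ ⟨⟨i, j, m⟩, rfl⟩ <;> rw [hg]
  · refine Submodule.subset_span ⟨(i + 1, j, m), ?_⟩
    simp only [pow_succ', mul_assoc]
  · have h : x * (a ^ i * x ^ j * y ^ m) = q ^ i • (a ^ i * x ^ (j + 1) * y ^ m) := by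
      rw [← mul_assoc, ← mul_assoc, mul_pow_of_mul_eq_smul hxa, pow_succ']
      simp only [smul_mul_assoc, mul_assoc]
    rw [h]
    exact Submodule.smul_mem _ _ (Submodule.subset_span ⟨(i, j + 1, m), rfl⟩)
  · obtain ⟨p, hp⟩ := exists_mul_pow_eq_aeval_mul hxa hyx j
    have h : y * (a ^ i * x ^ j * y ^ m) =
        q ^ i • (aeval a (X ^ i * p) * x ^ j * y ^ (m + 1)) := by
      rw [← mul_assoc, ← mul_assoc, mul_pow_of_mul_eq_smul hya, smul_mul_assoc, smul_mul_assoc,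
        mul_assoc (a ^ i), hp, map_mul, aeval_X_pow, pow_succ']
      simp only [mul_assoc]
    rw [h]
    exact Submodule.smul_mem _ _ (aeval_mul_pow_mul_pow_mem_span _ _ _)

theorem span_monomials_fin_eq {n : ℕ} (hn : 0 < n) (ha : a ^ n = 1) (hx : x ^ n = 1)
    (hy : y ^ n = 1) :
    Submodule.span R (Set.range fun t : Fin n × Fin n × Fin n =>
      a ^ (t.1 : ℕ) * x ^ (t.2.1 : ℕ) * y ^ (t.2.2 : ℕ)) =
    Submodule.span R (Set.range fun t : ℕ × ℕ × ℕ => a ^ t.1 * x ^ t.2.1 * y ^ t.2.2) := by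
  refine le_antisymm (Submodule.span_mono ?_) (Submodule.span_le.2 ?_)
  · rintro _ ⟨⟨i, j, m⟩, rfl⟩
    exact ⟨(i, j, m), rfl⟩
  · rintro _ ⟨⟨i, j, m⟩, rfl⟩
    refine Submodule.subset_span ⟨(⟨i % n, Nat.mod_lt _ hn⟩, ⟨j % n, Nat.mod_lt _ hn⟩,
      ⟨m % n, Nat.mod_lt _ hn⟩), ?_⟩
    simp only [← pow_eq_pow_mod _ ha, ← pow_eq_pow_mod _ hx, ← pow_eq_pow_mod _ hy]

end SkewMonomials

theorem ZMod.eq_natCast_iff_val_eq {n m : ℕ} [NeZero n] (hm : m < n) (u : ZMod n) :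
    u = m ↔ u.val = m := by
  constructor
  · rintro rfl
    exact ZMod.val_natCast_of_lt hm
  · intro h
    rw [← h, ZMod.natCast_zmod_val]

section RootsOfUnity

variable {K : Type*} [Field K] {n : ℕ} {Q : K}

theorem IsPrimitiveRoot.pow_eq_pow_iff_natCast_eq [NeZero n] (hQ : IsPrimitiveRoot Q n)
    (s t : ℕ) : Q ^ s = Q ^ t ↔ (s : ZMod n) = t := by
  rw [ZMod.natCast_eq_natCast_iff, hQ.eq_orderOf,
    (hQ.isOfFinOrder (NeZero.ne n)).pow_eq_pow_iff_modEq]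

theorem geom_sum_eq_zero_of_pow_eq_one {z : K} (hz : z ^ n = 1) (hz1 : z ≠ 1) :
    ∑ j ∈ Finset.range n, z ^ j = 0 := by
  rw [geom_sum_eq hz1, hz, sub_self, zero_div]

theorem IsPrimitiveRoot.isCoprime_X_pow_sub_one [NeZero n] (hQ : IsPrimitiveRoot Q n) {p : K[X]}
    (hp : ∀ t : ℕ, p.eval (Q ^ t) ≠ 0) : IsCoprime p (X ^ n - 1) := by
  rw [X_pow_sub_one_eq_prod (NeZero.pos n) hQ]
  refine IsCoprime.prod_right fun ζ hζ => ?_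
  obtain ⟨t, -, rfl⟩ :=
    hQ.eq_pow_of_pow_eq_one ((Polynomial.mem_nthRootsFinset (NeZero.pos n) 1).1 hζ)
  exact ((irreducible_X_sub_C _).coprime_iff_not_dvd.2 fun h => hp t (dvd_iff_isRoot.1 h)).symm

theorem IsPrimitiveRoot.exists_aeval_mul_aeval_eq_one [NeZero n] {A : Type*} [Ring A]
    [Algebra K A] {a : A} (ha : a ^ n = 1) (hQ : IsPrimitiveRoot Q n) {p : K[X]}
    (hp : ∀ t : ℕ, p.eval (Q ^ t) ≠ 0) : ∃ g : K[X], aeval a g * aeval a p = 1 := by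
  obtain ⟨g, v, h⟩ := hQ.isCoprime_X_pow_sub_one hp
  refine ⟨g, ?_⟩
  simpa [ha] using congrArg (aeval a) h

end RootsOfUnity

noncomputable def onePoly (k : Type*) [Field k] (n : ℕ) (Q : k) (s : ZMod n) : k[X] :=
  ((n : k))⁻¹ • ∑ j ∈ Finset.range n, (Q ^ (s.val * j))⁻¹ • (X : k[X]) ^ j

noncomputable def EPoly (k : Type*) [Field k] (n : ℕ) (Q : k) (r : ZMod n) : k[X] :=
  (∑ m ∈ Finset.range (n - 1), onePoly k n Q ((m : ZMod n) - r)) +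
    Q • onePoly k n Q (((n : ZMod n) - 1) - r)

section Presentation

variable {k : Type*} [Field k] {n : ℕ} {Q : k}

theorem eval_onePoly [NeZero n] (hQ : IsPrimitiveRoot Q n) (s : ZMod n) (t : ℕ) :
    (onePoly k n Q s).eval (Q ^ t) = if (t : ZMod n) = s then 1 else 0 := by
  have hQ0 : Q ≠ 0 := hQ.ne_zero (NeZero.ne n)
  have : NeZero (n : k) := hQ.neZero'
  set z := Q ^ t * (Q ^ s.val)⁻¹
  have hsum : (onePoly k n Q s).eval (Q ^ t) = (n : k)⁻¹ * ∑ j ∈ Finset.range n, z ^ j := by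
    simp only [onePoly, eval_smul, eval_finsetSum, eval_pow, eval_X, smul_eq_mul, z, mul_pow,
      inv_pow, ← pow_mul, mul_comm]
  have hz1 : z = 1 ↔ (t : ZMod n) = s := by
    rw [mul_inv_eq_one₀ (pow_ne_zero _ hQ0), hQ.pow_eq_pow_iff_natCast_eq, ZMod.natCast_zmod_val]
  split_ifs with h
  · rw [hsum, hz1.2 h]
    simpa using inv_mul_cancel₀ (NeZero.ne (n : k))
  · have hzn : z ^ n = 1 := by
      rw [mul_pow, inv_pow, ← pow_mul, ← pow_mul, mul_comm t, mul_comm s.val, pow_mul, pow_mul,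
        hQ.pow_eq_one, one_pow, one_pow, inv_one, mul_one]
    rw [hsum, geom_sum_eq_zero_of_pow_eq_one hzn (mt hz1.1 h), mul_zero]

theorem eval_EPoly [NeZero n] (hQ : IsPrimitiveRoot Q n) (r : ZMod n) (t : ℕ) :
    (EPoly k n Q r).eval (Q ^ t) = if ((t : ZMod n) + r).val = n - 1 then Q else 1 := by
  set u := (t : ZMod n) + r
  have hcond : ∀ m < n, (t : ZMod n) = m - r ↔ u.val = m := fun m hm => by
    rw [eq_sub_iff_add_eq, ZMod.eq_natCast_iff_val_eq hm]
  have hlast : (n : ZMod n) - 1 = ((n - 1 : ℕ) : ZMod n) := by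
    rw [Nat.cast_sub NeZero.one_le, Nat.cast_one]
  have hsum : ∀ m ∈ Finset.range (n - 1),
      (if (t : ZMod n) = m - r then (1 : k) else 0) = if u.val = m then 1 else 0 := fun m hm =>
    if_congr (hcond m (by simp at hm; omega)) rfl rfl
  simp only [EPoly, eval_add, eval_finsetSum, eval_smul, eval_onePoly hQ, hlast,
    Finset.sum_congr rfl hsum, Finset.sum_ite_eq, hcond (n - 1) (by have := NeZero.pos n; omega)]
  have := ZMod.val_lt u
  by_cases h : u.val = n - 1
  · simp [h]
  · simp [h, Finset.mem_range]
    omega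

theorem eval_EPoly_ne_zero [NeZero n] (hQ : IsPrimitiveRoot Q n) (r : ZMod n) (t : ℕ) :
    (EPoly k n Q r).eval (Q ^ t) ≠ 0 := by
  rw [eval_EPoly hQ]
  split_ifs
  exacts [hQ.ne_zero (NeZero.ne n), one_ne_zero]

theorem Ba_pow_eq_one : Ba k n Q ^ n = 1 :=
  (map_pow _ _ _).symm.trans ((RingQuot.mkAlgHom_rel k BRel.apow).trans (map_one _))

theorem Bxi_pow_eq_one : Bxi k n Q ^ n = 1 :=
  (map_pow _ _ _).symm.trans ((RingQuot.mkAlgHom_rel k BRel.xipow).trans (map_one _))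

theorem Beta_pow_eq_one : Beta k n Q ^ n = 1 :=
  (map_pow _ _ _).symm.trans ((RingQuot.mkAlgHom_rel k BRel.etapow).trans (map_one _))

theorem Bxi_mul_Ba : Bxi k n Q * Ba k n Q = Q • (Ba k n Q * Bxi k n Q) := by
  have h := RingQuot.mkAlgHom_rel k (BRel.xia (k := k) (n := n) (Q := Q))
  rw [map_mul, map_smul, map_mul] at h
  exact h

theorem Beta_mul_Ba : Beta k n Q * Ba k n Q = Q • (Ba k n Q * Beta k n Q) := by
  have h := RingQuot.mkAlgHom_rel k (BRel.etaa (k := k) (n := n) (Q := Q))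
  rw [map_mul, map_smul, map_mul] at h
  exact h

theorem mkAlgHom_EF (r : ZMod n) :
    RingQuot.mkAlgHom k (BRel k n Q) (EF k n Q r) = aeval (Ba k n Q) (EPoly k n Q r) := by
  simp only [EF, EPoly, oneF, onePoly, map_add, map_smul, map_sum, map_pow, aeval_X]
  rfl

theorem aeval_EPoly_mul_Bxi_mul_Beta :
    aeval (Ba k n Q) (EPoly k n Q 0) * (Bxi k n Q * Beta k n Q) =
      aeval (Ba k n Q) (EPoly k n Q (-1)) * (Beta k n Q * Bxi k n Q) := by
  have h := RingQuot.mkAlgHom_rel k (BRel.xieta (k := k) (n := n) (Q := Q))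
  rw [map_mul, map_mul, map_mul, map_mul, mkAlgHom_EF, mkAlgHom_EF] at h
  exact h

theorem Beta_mul_Bxi_eq_aeval_mul [NeZero n] (hQ : IsPrimitiveRoot Q n) :
    ∃ c : k[X], Beta k n Q * Bxi k n Q = aeval (Ba k n Q) c * (Bxi k n Q * Beta k n Q) := by
  obtain ⟨g, hg⟩ :=
    hQ.exists_aeval_mul_aeval_eq_one (a := Ba k n Q) Ba_pow_eq_one (eval_EPoly_ne_zero hQ (-1))
  refine ⟨g * EPoly k n Q 0, ?_⟩
  rw [map_mul, mul_assoc, aeval_EPoly_mul_Bxi_mul_Beta, ← mul_assoc, hg, one_mul]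

theorem adjoin_Ba_Bxi_Beta : Algebra.adjoin k {Ba k n Q, Bxi k n Q, Beta k n Q} = ⊤ := by
  have h : (Algebra.adjoin k (Set.range (FreeAlgebra.ι k))).map
      (RingQuot.mkAlgHom k (BRel k n Q)) ≤ Algebra.adjoin k {Ba k n Q, Bxi k n Q, Beta k n Q} := by
    rw [AlgHom.map_adjoin]
    refine Algebra.adjoin_mono ?_
    rintro _ ⟨_, ⟨i, rfl⟩, rfl⟩
    fin_cases i
    exacts [Set.mem_insert _ _, Set.mem_insert_of_mem _ (Set.mem_insert _ _),
      Set.mem_insert_of_mem _ (Set.mem_insert_of_mem _ rfl)]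
  rw [FreeAlgebra.adjoin_range_ι, Algebra.map_top,
    (AlgHom.range_eq_top _).2 (RingQuot.mkAlgHom_surjective k _)] at h
  exact top_le_iff.1 h

end Presentation

theorem B_spanning_general (n : ℕ) (hn : 2 ≤ n) (k : Type*) [Field k]
    (Q : k) (hQ : IsPrimitiveRoot Q n) :
    (⊤ : Submodule k (BAlgebra k n Q)) =
      Submodule.span k (Set.range fun t : Fin n × Fin n × Fin n =>
        Ba k n Q ^ (t.1 : ℕ) * Bxi k n Q ^ (t.2.1 : ℕ) *
          Beta k n Q ^ (t.2.2 : ℕ)) ∧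
    Module.finrank k (BAlgebra k n Q) ≤ n ^ 3 := by
  have : NeZero n := ⟨by omega⟩
  obtain ⟨c, hc⟩ := Beta_mul_Bxi_eq_aeval_mul hQ
  have hspan := (span_monomials_fin_eq (NeZero.pos n) Ba_pow_eq_one Bxi_pow_eq_one
    Beta_pow_eq_one).trans (span_monomials_eq_top adjoin_Ba_Bxi_Beta Bxi_mul_Ba Beta_mul_Ba hc)
  refine ⟨hspan.symm, ?_⟩
  calc Module.finrank k (BAlgebra k n Q)
      = Module.finrank k (⊤ : Submodule k (BAlgebra k n Q)) := finrank_top k _ |>.symm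
    _ ≤ Fintype.card (Fin n × Fin n × Fin n) := hspan ▸ finrank_range_le_card _
    _ = n ^ 3 := by simp [pow_three]

/-- The monomials aⁱξʲηᵐ, 0 ≤ i,j,m < n, span B(Q); in particular
    dim B(Q) ≤ n³. -/
theorem B_spanning (n : ℕ) (hn : 2 ≤ n) (k : Type*) [Field k] [IsAlgClosed k]
    [CharZero k] (Q : k) (hQ : IsPrimitiveRoot Q n) :
    (⊤ : Submodule k (BAlgebra k n Q)) =
      Submodule.span k (Set.range fun t : Fin n × Fin n × Fin n =>
        Ba k n Q ^ (t.1 : ℕ) * Bxi k n Q ^ (t.2.1 : ℕ) *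
          Beta k n Q ^ (t.2.2 : ℕ)) ∧
    Module.finrank k (BAlgebra k n Q) ≤ n ^ 3 :=
  B_spanning_general n hn k Q hQ
end
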